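/- arXiv:1701.06447 — 3 statements merged into one kernel-verified Lean document; each statement's English description precedes it below -/
import Mathlib

section
/- For every natural number k, (4/π) · ∫₀^{π/2} (4·cos²θ − 1)^k · sin²θ dθ = Σ_{i=0}^{k} (−1)^{k−i} · binom(k, i) · Cᵢ, where Cᵢ denotes the i-th Catalan number. -/
/-!
Expanding `(4 cos² θ - 1)^k` binomially reduces the claim to the moments
`(4/π) ∫₀^{π/2} (4 cos² θ)^i sin² θ dθ = Cᵢ`. Since `sin² = 1 - cos²`, the reduction formula
for `∫ cos^n` gives `∫₀^{π/2} cos^n sin² = (∫₀^{π/2} cos^n) / (n + 2)`, and Wallis' formula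
`∫₀^{π/2} cos^{2i} = (π/2) binom(2i, i) / 4^i` turns the moment into `binom(2i, i) / (i + 1) = Cᵢ`.
-/

open Real intervalIntegral Finset

theorem sub_one_pow_mul_eq_sum {R : Type*} [CommRing R] (x y : R) (k : ℕ) :
    (x - 1) ^ k * y =
      ∑ i ∈ range (k + 1), (-1 : R) ^ (k - i) * (k.choose i : R) * (x ^ i * y) := by
  rw [sub_eq_add_neg, add_pow, sum_mul]
  refine sum_congr rfl fun i _ => ?_
  ring

theorem integral_cos_pow_mul_sin_sq_zero_pi_div_two (n : ℕ) :
    ∫ θ in (0 : ℝ)..π / 2, cos θ ^ n * sin θ ^ 2 =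
      (∫ θ in (0 : ℝ)..π / 2, cos θ ^ n) / (n + 2) := by
  have hsplit : ∫ θ in (0 : ℝ)..π / 2, cos θ ^ n * sin θ ^ 2 =
      (∫ θ in (0 : ℝ)..π / 2, cos θ ^ n) - ∫ θ in (0 : ℝ)..π / 2, cos θ ^ (n + 2) := by
    rw [← integral_sub (by apply Continuous.intervalIntegrable; fun_prop)
      (by apply Continuous.intervalIntegrable; fun_prop)]
    congr 1 with θ
    rw [sin_sq]
    ring
  rw [hsplit, integral_cos_pow]
  simp only [cos_pi_div_two, sin_zero, zero_pow n.succ_ne_zero, zero_mul, mul_zero, sub_self,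
    zero_div, zero_add]
  field_simp
  ring

theorem integral_cos_pow_two_mul_zero_pi_div_two (n : ℕ) :
    ∫ θ in (0 : ℝ)..π / 2, cos θ ^ (2 * n) = π / 2 * n.centralBinom / 4 ^ n := by
  induction n with
  | zero => simp
  | succ m ih =>
    have hcentralBinom :
        ((m + 1 : ℕ) : ℝ) * (m + 1).centralBinom = 2 * (2 * m + 1) * m.centralBinom := by
      exact_mod_cast Nat.succ_mul_centralBinom_succ m
    rw [mul_add, mul_one, integral_cos_pow, ih]
    simp only [cos_pi_div_two, sin_zero, zero_pow (2 * m).succ_ne_zero, zero_mul, mul_zero,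
      sub_self, zero_div, zero_add]
    push_cast at hcentralBinom ⊢
    field_simp
    rw [pow_succ]
    linear_combination (-2 * 4 ^ m : ℝ) * hcentralBinom

theorem integral_cos_pow_two_mul_mul_sin_sq_zero_pi_div_two (i : ℕ) :
    ∫ θ in (0 : ℝ)..π / 2, cos θ ^ (2 * i) * sin θ ^ 2 = π / 4 * catalan i / 4 ^ i := by
  have hcatalan : ((i + 1 : ℕ) : ℝ) * catalan i = i.centralBinom := by
    exact_mod_cast succ_mul_catalan_eq_centralBinom i
  rw [integral_cos_pow_mul_sin_sq_zero_pi_div_two, integral_cos_pow_two_mul_zero_pi_div_two,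
    ← hcatalan]
  push_cast
  field_simp
  ring

theorem four_div_pi_mul_integral_four_mul_cos_sq_pow_mul_sin_sq (i : ℕ) :
    4 / π * ∫ θ in (0 : ℝ)..π / 2, (4 * cos θ ^ 2) ^ i * sin θ ^ 2 = catalan i := by
  have hfactor (θ : ℝ) :
      (4 * cos θ ^ 2) ^ i * sin θ ^ 2 = 4 ^ i * (cos θ ^ (2 * i) * sin θ ^ 2) := by
    ring
  simp_rw [hfactor]
  rw [integral_const_mul, integral_cos_pow_two_mul_mul_sin_sq_zero_pi_div_two]
  field_simp

/-- For every natural number `k`,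
`(4/π) ∫₀^{π/2} (4 cos²θ - 1)^k sin²θ dθ = Σ_{i=0}^k (-1)^(k-i) (k choose i) Cᵢ`,
where `Cᵢ` is the `i`-th Catalan number. -/
theorem integral_weyl_eq_alternating_sum_catalan (k : ℕ) :
    4 / Real.pi *
        ∫ θ in (0:ℝ)..(Real.pi / 2),
          (4 * Real.cos θ ^ 2 - 1) ^ k * Real.sin θ ^ 2
      = ∑ i ∈ Finset.range (k + 1),
          (-1 : ℝ) ^ (k - i) * (k.choose i : ℝ) * (catalan i : ℝ) := by
  simp_rw [sub_one_pow_mul_eq_sum]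
  rw [integral_finsetSum fun i _ => by apply Continuous.intervalIntegrable; fun_prop, mul_sum]
  refine sum_congr rfl fun i _ => ?_
  rw [integral_const_mul, ← four_div_pi_mul_integral_four_mul_cos_sq_pow_mul_sin_sq i]
  ring
end

section
/- For every natural number k ≥ 1, the number of elements of NC₂°(k) equals (4/π) · ∫₀^{π/2} (4·cos²θ − 1)^k · sin²θ dθ. -/
/-- `P` is a perfect matching of `{1, …, 2k}`: a partition of `{1, …, 2k}`
into blocks of size `2`. -/
def IsPerfectMatching (k : ℕ) (P : Finset (Finset ℕ)) : Prop :=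
  (∀ B ∈ P, B.card = 2) ∧ (∀ B ∈ P, B ⊆ Finset.Icc 1 (2 * k)) ∧
    ∀ i ∈ Finset.Icc 1 (2 * k), ∃! B : Finset ℕ, B ∈ P ∧ i ∈ B

/-- A matching is noncrossing if there are no `a < b < c < d` with
`{a, c}` and `{b, d}` both blocks. -/
def IsNoncrossing (P : Finset (Finset ℕ)) : Prop :=
  ∀ a b c d : ℕ, a < b → b < c → c < d →
    ({a, c} : Finset ℕ) ∈ P → ({b, d} : Finset ℕ) ∉ P

/-- `NC₂°(k)`: noncrossing perfect matchings of `{1, …, 2k}` with no block of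
the form `{2j - 1, 2j}` for `1 ≤ j ≤ k`. -/
def NCtwoCirc (k : ℕ) : Set (Finset (Finset ℕ)) :=
  {P | IsPerfectMatching k P ∧ IsNoncrossing P ∧
    ∀ j : ℕ, 1 ≤ j → j ≤ k → ({2 * j - 1, 2 * j} : Finset ℕ) ∉ P}

/-!
Both sides equal `∑ m ≤ k, (-1)^m * (k choose m) * catalan (k - m)`.

Counting: by inclusion–exclusion over the set `T` of forbidden blocks `{2j-1, 2j}` that a
noncrossing matching is required to contain. Such a block joins neighbours, so it crosses nothing
and can be removed; what remains is an arbitrary noncrossing matching of the other `2k - 2|T|`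
points. Noncrossing perfect matchings of any `2n`-element set of naturals are counted by
`catalan n`: the block `{a, b}` of the least point `a` splits the others into the points between
`a` and `b` and the points after `b`, which are matched independently.

Integral: expand `(4 cos²θ - 1)^k` binomially; by the Wallis recursion,
`∫₀^{π/2} cos^{2m}θ sin²θ dθ = (π/4) catalan m / 4^m`.
-/

open Finset Real intervalIntegral

theorem card_filter_forall_not_eq_sum {α ι : Type*} [DecidableEq ι] (s : Finset α) (I : Finset ι)
    (p : ι → α → Prop) [∀ i, DecidablePred (p i)] :
    (#{x ∈ s | ∀ i ∈ I, ¬p i x} : ℤ)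
      = ∑ T ∈ I.powerset, (-1 : ℤ) ^ #T * #{x ∈ s | ∀ i ∈ T, p i x} := by
  simp only [card_filter, Nat.cast_sum, Nat.cast_ite, Nat.cast_one, Nat.cast_zero, mul_sum, mul_ite,
    mul_one, mul_zero]
  rw [sum_comm]
  refine sum_congr rfl fun x _ => ?_
  have hpowerset : {T ∈ I.powerset | ∀ i ∈ T, p i x} = {i ∈ I | p i x}.powerset := by
    ext T
    simp only [mem_filter, mem_powerset, subset_iff]
    exact ⟨fun h i hi => ⟨h.1 hi, h.2 i hi⟩, fun h => ⟨fun i hi => (h hi).1, fun i hi => (h hi).2⟩⟩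
  rw [← sum_filter, hpowerset, sum_powerset_neg_one_pow_card]
  exact if_congr filter_eq_empty_iff.symm rfl rfl

theorem sum_card_filter_lt_card_filter_gt {α M : Type*} [LinearOrder α] [AddCommMonoid M]
    (T : Finset α) (g : ℕ → ℕ → M) :
    ∑ b ∈ T, g #{x ∈ T | x < b} #{x ∈ T | b < x} = ∑ j ∈ range #T, g j (#T - 1 - j) := by
  induction T using Finset.induction_on_max generalizing g with
  | empty => simp
  | insert m T hm ih =>
    have hmT : m ∉ T := fun h => lt_irrefl m (hm m h)
    have hbelow_m : {x ∈ insert m T | x < m} = T := by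
      rw [filter_insert, if_neg (lt_irrefl m)]
      exact filter_true_of_mem hm
    have habove_m : {x ∈ insert m T | m < x} = ∅ := by
      rw [filter_insert, if_neg (lt_irrefl m)]
      exact filter_false_of_mem fun x hx => (hm x hx).not_gt
    have hbelow : ∀ b ∈ T, {x ∈ insert m T | x < b} = {x ∈ T | x < b} := fun b hb => by
      rw [filter_insert, if_neg (hm b hb).not_gt]
    have habove : ∀ b ∈ T, #{x ∈ insert m T | b < x} = #{x ∈ T | b < x} + 1 := fun b hb => by
      rw [filter_insert, if_pos (hm b hb), card_insert_of_notMem fun h => hmT (mem_filter.mp h).1]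
    rw [sum_insert hmT, card_insert_of_notMem hmT, sum_range_succ, hbelow_m, habove_m, card_empty,
      Nat.add_sub_cancel, Nat.sub_self, add_comm]
    congr 1
    rw [sum_congr rfl fun b hb => by rw [hbelow b hb, habove b hb], ih fun i j => g i (j + 1)]
    refine sum_congr rfl fun j hj => ?_
    rw [mem_range] at hj
    congr 1
    omega

/-- Counts the noncrossing perfect matchings of any `n` points (`card_noncrossingMatchings`);
allowing odd `n` makes the recursion over the partner of the least point uniform. -/
def aeratedCatalan (n : ℕ) : ℕ := if Even n then catalan (n / 2) else 0

theorem aeratedCatalan_two_mul (n : ℕ) : aeratedCatalan (2 * n) = catalan n := by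
  simp [aeratedCatalan]

theorem aeratedCatalan_of_odd {n : ℕ} (h : Odd n) : aeratedCatalan n = 0 := by
  simp [aeratedCatalan, Nat.not_even_iff_odd.mpr h]

theorem aeratedCatalan_succ (n : ℕ) :
    aeratedCatalan (n + 1) = ∑ j ∈ range n, aeratedCatalan j * aeratedCatalan (n - 1 - j) := by
  rcases n with _ | n
  · simp [aeratedCatalan]
  rw [Nat.add_sub_cancel]
  rcases Nat.even_or_odd n with ⟨i, rfl⟩ | hodd
  · have hsub : (range (i + 1)).image (2 * ·) ⊆ range (i + i + 1) := by
      intro x hx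
      simp only [mem_image, mem_range] at hx ⊢
      omega
    have hvanish : ∀ x ∈ range (i + i + 1), x ∉ (range (i + 1)).image (2 * ·) →
        aeratedCatalan x * aeratedCatalan (i + i - x) = 0 := by
      intro x hx hximage
      rcases Nat.even_or_odd x with ⟨j, rfl⟩ | hx'
      · refine absurd (mem_image.mpr ⟨j, ?_, by ring⟩) hximage
        rw [mem_range] at hx ⊢
        omega
      · rw [aeratedCatalan_of_odd hx', zero_mul]
    rw [show i + i + 1 + 1 = 2 * (i + 1) by ring, aeratedCatalan_two_mul, catalan_succ,
      Fin.sum_univ_eq_sum_range (fun j => catalan j * catalan (i - j)), ← sum_subset hsub hvanish,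
      sum_image fun x _ y _ h => by simpa using h]
    refine sum_congr rfl fun j hj => ?_
    rw [show i + i - 2 * j = 2 * (i - j) by rw [mem_range] at hj; omega, aeratedCatalan_two_mul,
      aeratedCatalan_two_mul]
  · rw [aeratedCatalan_of_odd (by simpa [parity_simps] using hodd), eq_comm]
    refine sum_eq_zero fun j hj => ?_
    rcases Nat.even_or_odd j with hj' | hj'
    · have hjn : j ≤ n := Nat.lt_succ_iff.mp (mem_range.mp hj)
      rw [aeratedCatalan_of_odd (Nat.Odd.sub_even hjn hodd hj'), mul_zero]
    · rw [aeratedCatalan_of_odd hj', zero_mul]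

/-- `IsPerfectMatching` on an arbitrary finite `S` (see `isPerfectMatchingOn_iff`), phrased by
disjointness and cover so that it is stable under unions and erasure of blocks. -/
def IsPerfectMatchingOn (S : Finset ℕ) (P : Finset (Finset ℕ)) : Prop :=
  (∀ B ∈ P, B.card = 2) ∧ (P : Set (Finset ℕ)).PairwiseDisjoint id ∧ P.sup id = S

namespace IsPerfectMatchingOn

variable {S T : Finset ℕ} {P Q : Finset (Finset ℕ)} {B C V : Finset ℕ}

theorem subset (h : IsPerfectMatchingOn S P) (hB : B ∈ P) : B ⊆ S :=
  h.2.2 ▸ le_sup (f := id) hB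

theorem exists_mem (h : IsPerfectMatchingOn S P) {x : ℕ} (hx : x ∈ S) : ∃ B ∈ P, x ∈ B := by
  rw [← h.2.2] at hx
  simpa using hx

theorem eq_of_mem (h : IsPerfectMatchingOn S P) (hB : B ∈ P) (hC : C ∈ P) {x : ℕ}
    (hxB : x ∈ B) (hxC : x ∈ C) : B = C := by
  by_contra hne
  exact disjoint_left.mp (h.2.1 hB hC hne) hxB hxC

theorem card_eq (h : IsPerfectMatchingOn S P) : S.card = 2 * P.card := by
  rw [← h.2.2, sup_eq_biUnion, card_biUnion h.2.1]
  simp only [id, sum_congr rfl h.1, sum_const, smul_eq_mul, mul_comm]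

theorem union (h₁ : IsPerfectMatchingOn S P) (h₂ : IsPerfectMatchingOn T Q)
    (hST : Disjoint S T) : IsPerfectMatchingOn (S ∪ T) (P ∪ Q) := by
  refine ⟨fun B hB => (mem_union.mp hB).elim (h₁.1 B) (h₂.1 B), ?_, by rw [sup_union, h₁.2.2, h₂.2.2]; rfl⟩
  rw [coe_union]
  exact h₁.2.1.union h₂.2.1 fun B hB C hC _ => hST.mono (h₁.subset hB) (h₂.subset hC)

theorem insert (h : IsPerfectMatchingOn S P) (hV : V.card = 2) (hVS : Disjoint V S) :
    IsPerfectMatchingOn (V ∪ S) (insert V P) := by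
  have hsingle : IsPerfectMatchingOn V {V} :=
    ⟨by simpa using hV, by simp, by simp⟩
  rw [Finset.insert_eq]
  exact hsingle.union h hVS

theorem erase (h : IsPerfectMatchingOn S P) (hV : V ∈ P) :
    IsPerfectMatchingOn (S \ V) (P.erase V) := by
  refine ⟨fun B hB => h.1 B (mem_of_mem_erase hB), h.2.1.subset (by simp), ?_⟩
  have hdisj : Disjoint V ((P.erase V).sup id) :=
    Finset.disjoint_sup_right.mpr fun B hB =>
      h.2.1 hV (mem_of_mem_erase hB) (ne_of_mem_erase hB).symm
  rw [← h.2.2, ← insert_erase hV, sup_insert, erase_insert_eq_erase, erase_idem]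
  exact (union_sdiff_cancel_left hdisj).symm

theorem restrict (h : IsPerfectMatchingOn S P) (hT : ∀ B ∈ P, B ⊆ T ∨ Disjoint B T) :
    IsPerfectMatchingOn (S ∩ T) (P.filter (· ⊆ T)) := by
  refine ⟨fun B hB => h.1 B (mem_of_mem_filter B hB),
    h.2.1.subset (coe_subset.mpr (Finset.filter_subset _ _)), ?_⟩
  ext x
  simp only [mem_sup, mem_filter, id, mem_inter]
  constructor
  · rintro ⟨B, ⟨hB, hBT⟩, hx⟩
    exact ⟨h.subset hB hx, hBT hx⟩
  · rintro ⟨hxS, hxT⟩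
    obtain ⟨B, hB, hx⟩ := h.exists_mem hxS
    refine ⟨B, ⟨hB, ?_⟩, hx⟩
    exact (hT B hB).resolve_right fun hd => disjoint_left.mp hd hx hxT

end IsPerfectMatchingOn

theorem isPerfectMatchingOn_iff {S : Finset ℕ} {P : Finset (Finset ℕ)} :
    IsPerfectMatchingOn S P ↔ (∀ B ∈ P, B.card = 2) ∧ (∀ B ∈ P, B ⊆ S) ∧
      ∀ i ∈ S, ∃! B : Finset ℕ, B ∈ P ∧ i ∈ B := by
  refine ⟨fun h => ⟨h.1, fun B => h.subset, fun i hi => ?_⟩, fun ⟨hcard, hsub, huniq⟩ => ?_⟩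
  · obtain ⟨B, hB, hiB⟩ := h.exists_mem hi
    exact ⟨B, ⟨hB, hiB⟩, fun C hC => h.eq_of_mem hC.1 hB hC.2 hiB⟩
  · refine ⟨hcard, fun B hB C hC hne => disjoint_left.mpr fun i hiB hiC => hne ?_, ?_⟩
    · exact (huniq i (hsub B hB hiB)).unique ⟨hB, hiB⟩ ⟨hC, hiC⟩
    · ext i
      simp only [mem_sup, id]
      refine ⟨fun ⟨B, hB, hiB⟩ => hsub B hB hiB, fun hi => ?_⟩
      obtain ⟨B, ⟨hB, hiB⟩, -⟩ := huniq i hi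
      exact ⟨B, hB, hiB⟩

def Crosses (B C : Finset ℕ) : Prop :=
  ∃ a b c d : ℕ, a < b ∧ b < c ∧ c < d ∧
    (B = {a, c} ∧ C = {b, d} ∨ B = {b, d} ∧ C = {a, c})

section Crosses

variable {B C V : Finset ℕ} {P Q : Finset (Finset ℕ)}

theorem Crosses.symm (h : Crosses B C) : Crosses C B := by
  obtain ⟨a, b, c, d, hab, hbc, hcd, h⟩ := h
  exact ⟨a, b, c, d, hab, hbc, hcd, h.symm.imp And.symm And.symm⟩

theorem Crosses.exists_mem_between (h : Crosses B C) :
    ∃ x ∈ B, ∃ y ∈ B, ∃ z ∈ C, x < z ∧ z < y := by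
  obtain ⟨a, b, c, d, hab, hbc, hcd, ⟨rfl, rfl⟩ | ⟨rfl, rfl⟩⟩ := h
  · exact ⟨a, by simp, c, by simp, b, by simp, hab, hbc⟩
  · exact ⟨b, by simp, d, by simp, c, by simp, hbc, hcd⟩

theorem not_crosses_self (B : Finset ℕ) : ¬Crosses B B := by
  rintro ⟨a, b, c, d, hab, hbc, hcd, h⟩
  have hBB : ({a, c} : Finset ℕ) = {b, d} := by
    rcases h with ⟨h₁, h₂⟩ | ⟨h₁, h₂⟩
    exacts [h₁.symm.trans h₂, h₂.symm.trans h₁]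
  have ha : a ∈ ({b, d} : Finset ℕ) := hBB ▸ mem_insert_self a {c}
  simp only [mem_insert, mem_singleton] at ha
  omega

theorem not_crosses_pair_succ (c : ℕ) (B : Finset ℕ) : ¬Crosses {c, c + 1} B := by
  intro h
  obtain ⟨x, hx, y, hy, z, -, hxz, hzy⟩ := h.exists_mem_between
  simp only [mem_insert, mem_singleton] at hx hy
  omega

theorem isNoncrossing_iff : IsNoncrossing P ↔ ∀ B ∈ P, ∀ C ∈ P, ¬Crosses B C := by
  refine ⟨?_, fun h a b c d hab hbc hcd hac hbd =>
    h _ hac _ hbd ⟨a, b, c, d, hab, hbc, hcd, .inl ⟨rfl, rfl⟩⟩⟩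
  rintro hP B hB C hC ⟨a, b, c, d, hab, hbc, hcd, ⟨rfl, rfl⟩ | ⟨rfl, rfl⟩⟩
  · exact hP a b c d hab hbc hcd hB hC
  · exact hP a b c d hab hbc hcd hC hB

theorem IsNoncrossing.mono (hP : IsNoncrossing P) (hQP : Q ⊆ P) : IsNoncrossing Q :=
  fun a b c d hab hbc hcd hac => mt (@hQP _) (hP a b c d hab hbc hcd (hQP hac))

theorem isNoncrossing_union_iff :
    IsNoncrossing (P ∪ Q) ↔
      IsNoncrossing P ∧ IsNoncrossing Q ∧ ∀ B ∈ P, ∀ C ∈ Q, ¬Crosses B C := by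
  simp only [isNoncrossing_iff, mem_union]
  refine ⟨fun h => ⟨fun B hB C hC => h B (.inl hB) C (.inl hC),
    fun B hB C hC => h B (.inr hB) C (.inr hC), fun B hB C hC => h B (.inl hB) C (.inr hC)⟩, ?_⟩
  rintro ⟨hP, hQ, hPQ⟩ B (hB | hB) C (hC | hC)
  · exact hP B hB C hC
  · exact hPQ B hB C hC
  · exact fun h => hPQ C hC B hB h.symm
  · exact hQ B hB C hC

theorem isNoncrossing_insert_iff :
    IsNoncrossing (insert V P) ↔ IsNoncrossing P ∧ ∀ B ∈ P, ¬Crosses V B := by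
  have hV : IsNoncrossing {V} := isNoncrossing_iff.mpr (by simpa using not_crosses_self V)
  rw [insert_eq, isNoncrossing_union_iff]
  simp [hV]

end Crosses

open scoped Classical in
noncomputable def noncrossingMatchings (S : Finset ℕ) : Finset (Finset (Finset ℕ)) :=
  S.powerset.powerset.filter fun P => IsPerfectMatchingOn S P ∧ IsNoncrossing P

section NoncrossingMatchings

open scoped Classical

variable {S T V : Finset ℕ} {P : Finset (Finset ℕ)}

theorem mem_noncrossingMatchings :
    P ∈ noncrossingMatchings S ↔ IsPerfectMatchingOn S P ∧ IsNoncrossing P := by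
  rw [noncrossingMatchings, mem_filter, mem_powerset, and_iff_right_iff_imp]
  exact fun h B hB => mem_powerset.mpr (h.1.subset hB)

theorem noncrossingMatchings_empty : noncrossingMatchings ∅ = {∅} := by
  ext P
  rw [mem_noncrossingMatchings, mem_singleton]
  refine ⟨fun h => card_eq_zero.mp (by simpa using h.1.card_eq), ?_⟩
  rintro rfl
  exact ⟨⟨by simp, by simp, by simp⟩, isNoncrossing_iff.mpr (by simp)⟩

theorem card_noncrossingMatchings_filter_mem_and (hVS : V ⊆ S) (hV : V.card = 2)
    (p : Finset (Finset ℕ) → Prop) [DecidablePred p] :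
    #{P ∈ noncrossingMatchings S | V ∈ P ∧ p P}
      = #{P ∈ noncrossingMatchings (S \ V) | (∀ B ∈ P, ¬Crosses V B) ∧ p (insert V P)} := by
  have hnotmem : ∀ P ∈ noncrossingMatchings (S \ V), V ∉ P := fun P hP hVP => by
    have hsub := (mem_noncrossingMatchings.mp hP).1.subset hVP
    rw [subset_sdiff, disjoint_self_iff_empty] at hsub
    simp [hsub.2] at hV
  refine card_nbij' (fun P => P.erase V) (insert V) ?_ ?_ ?_ ?_
  · intro P hP
    simp only [mem_coe, mem_filter, mem_noncrossingMatchings] at hP ⊢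
    obtain ⟨⟨hPM, hNC⟩, hVP, hp⟩ := hP
    rw [← insert_erase hVP, isNoncrossing_insert_iff] at hNC
    exact ⟨⟨hPM.erase hVP, hNC.1⟩, hNC.2, by rwa [insert_erase hVP]⟩
  · intro P hP
    simp only [mem_coe, mem_filter, mem_noncrossingMatchings] at hP ⊢
    obtain ⟨⟨hPM, hNC⟩, hcross, hp⟩ := hP
    refine ⟨⟨?_, isNoncrossing_insert_iff.mpr ⟨hNC, hcross⟩⟩, mem_insert_self V P, hp⟩
    simpa [union_sdiff_of_subset hVS] using hPM.insert hV disjoint_sdiff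
  · intro P hP
    exact insert_erase (mem_filter.mp hP).2.1
  · intro P hP
    exact erase_insert (hnotmem P (mem_filter.mp hP).1)

theorem card_noncrossingMatchings_union_filter (hST : ∀ x ∈ S, ∀ y ∈ T, x < y) :
    #{P ∈ noncrossingMatchings (S ∪ T) | ∀ B ∈ P, B ⊆ S ∨ B ⊆ T}
      = #(noncrossingMatchings S) * #(noncrossingMatchings T) := by
  have hdisj : Disjoint S T := disjoint_left.mpr fun x hxS hxT => lt_irrefl x (hST x hxS x hxT)
  have hnot : ∀ B : Finset ℕ, B.card = 2 → B ⊆ S → B ⊆ T → False := fun B hB hBS hBT => by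
    simp [(disjoint_self_iff_empty _).mp (hdisj.mono hBS hBT)] at hB
  rw [← card_product]
  refine card_nbij' (fun P => ({B ∈ P | B ⊆ S}, {B ∈ P | B ⊆ T})) (fun p => p.1 ∪ p.2) ?_ ?_ ?_ ?_
  · intro P hP
    simp only [mem_coe, mem_filter, mem_product, mem_noncrossingMatchings] at hP ⊢
    obtain ⟨⟨hPM, hNC⟩, hsplit⟩ := hP
    refine ⟨⟨?_, hNC.mono (filter_subset _ _)⟩, ⟨?_, hNC.mono (filter_subset _ _)⟩⟩
    · simpa using hPM.restrict fun B hB => (hsplit B hB).imp_right fun h => hdisj.symm.mono_left h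
    · simpa using hPM.restrict fun B hB => (hsplit B hB).symm.imp_right fun h => hdisj.mono_left h
  · rintro ⟨P₁, P₂⟩ hp
    simp only [mem_coe, mem_filter, mem_product, mem_noncrossingMatchings] at hp ⊢
    obtain ⟨⟨hPM₁, hNC₁⟩, hPM₂, hNC₂⟩ := hp
    refine ⟨⟨hPM₁.union hPM₂ hdisj, isNoncrossing_union_iff.mpr ⟨hNC₁, hNC₂, ?_⟩⟩, ?_⟩
    · intro B hB C hC hcross
      obtain ⟨x, -, y, hy, z, hz, -, hzy⟩ := hcross.exists_mem_between
      exact absurd (hST y (hPM₁.subset hB hy) z (hPM₂.subset hC hz)) (not_lt.mpr hzy.le)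
    · intro B hB
      exact (mem_union.mp hB).imp hPM₁.subset hPM₂.subset
  · intro P hP
    dsimp only
    rw [filter_union_right]
    exact filter_true_of_mem (mem_filter.mp hP).2
  · rintro ⟨P₁, P₂⟩ hp
    simp only [mem_coe, mem_product, mem_noncrossingMatchings] at hp
    obtain ⟨⟨hPM₁, -⟩, hPM₂, -⟩ := hp
    simp only [filter_union, Prod.mk.injEq]
    constructor
    · rw [filter_true_of_mem fun B => hPM₁.subset,
        filter_false_of_mem fun B hB hBS => hnot B (hPM₂.1 B hB) hBS (hPM₂.subset hB), union_empty]
    · rw [filter_true_of_mem fun B => hPM₂.subset,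
        filter_false_of_mem fun B hB hBT => hnot B (hPM₁.1 B hB) (hPM₁.subset hB) hBT, empty_union]

end NoncrossingMatchings

section MinimalBlock

open scoped Classical

theorem not_crosses_pair_iff {a b : ℕ} {B : Finset ℕ} (hB : B.card = 2)
    (haB : ∀ x ∈ B, a < x) (hbB : b ∉ B) :
    ¬Crosses {a, b} B ↔ (∀ x ∈ B, x < b) ∨ ∀ x ∈ B, b < x := by
  obtain ⟨x, y, hxy, rfl⟩ := card_eq_two.mp hB
  simp only [mem_insert, mem_singleton, forall_eq_or_imp, forall_eq, not_or] at haB hbB ⊢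
  constructor
  · intro h
    by_contra hside
    apply h
    rcases lt_or_gt_of_ne hxy with hlt | hlt
    · exact ⟨a, x, b, y, haB.1, by omega, by omega, .inl ⟨rfl, rfl⟩⟩
    · exact ⟨a, y, b, x, haB.2, by omega, by omega, .inl ⟨rfl, pair_comm x y⟩⟩
  · intro hside hcross
    obtain ⟨p, hp, q, hq, z, hz, hpz, hzq⟩ := hcross.symm.exists_mem_between
    simp only [mem_insert, mem_singleton] at hp hq hz
    omega

theorem card_noncrossingMatchings_insert {a : ℕ} {T : Finset ℕ} (ha : a ∉ T) :
    #(noncrossingMatchings (insert a T))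
      = ∑ b ∈ T, #{P ∈ noncrossingMatchings (insert a T) | {a, b} ∈ P} := by
  rw [← card_biUnion]
  · congr 1
    ext P
    simp only [mem_biUnion, mem_filter]
    refine ⟨fun hP => ?_, fun ⟨_, _, hP, _⟩ => hP⟩
    have hPM := (mem_noncrossingMatchings.mp hP).1
    obtain ⟨B, hB, haB⟩ := hPM.exists_mem (mem_insert_self a T)
    obtain ⟨b, rfl, hba⟩ : ∃ b, B = {a, b} ∧ b ≠ a := by
      obtain ⟨x, y, hxy, rfl⟩ := card_eq_two.mp (hPM.1 B hB)
      rcases mem_insert.mp haB with rfl | h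
      · exact ⟨y, rfl, hxy.symm⟩
      · obtain rfl := mem_singleton.mp h
        exact ⟨x, pair_comm _ _, hxy⟩
    have hbT := mem_insert.mp (hPM.subset hB (mem_insert_of_mem (mem_singleton_self b)))
    exact ⟨b, hbT.resolve_left hba, hP, hB⟩
  · intro b hb c _ hbc
    refine disjoint_left.mpr fun P hPb hPc => ?_
    obtain ⟨hP, hab⟩ := mem_filter.mp hPb
    have hpair := (mem_noncrossingMatchings.mp hP).1.eq_of_mem hab (mem_filter.mp hPc).2
      (mem_insert_self a {b}) (mem_insert_self a {c})
    have hbc' : b ∈ ({a, c} : Finset ℕ) := hpair ▸ mem_insert_of_mem (mem_singleton_self b)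
    rcases mem_insert.mp hbc' with rfl | h
    · exact ha hb
    · exact hbc (mem_singleton.mp h)

theorem card_noncrossingMatchings_insert_filter_pair_mem {a b : ℕ} {T : Finset ℕ}
    (ha : ∀ x ∈ T, a < x) (hb : b ∈ T) :
    #{P ∈ noncrossingMatchings (insert a T) | {a, b} ∈ P}
      = #(noncrossingMatchings {x ∈ T | x < b}) * #(noncrossingMatchings {x ∈ T | b < x}) := by
  have hab : a < b := ha b hb
  have hsdiff : insert a T \ {a, b} = {x ∈ T | x < b} ∪ {x ∈ T | b < x} := by
    ext x
    simp only [mem_sdiff, mem_insert, mem_singleton, mem_union, mem_filter, not_or]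
    constructor
    · rintro ⟨rfl | hx, hxa, hxb⟩
      · exact absurd rfl hxa
      · exact (lt_or_gt_of_ne hxb).imp (⟨hx, ·⟩) (⟨hx, ·⟩)
    · rintro (⟨hx, hxb⟩ | ⟨hx, hxb⟩) <;> exact ⟨.inr hx, (ha x hx).ne', by omega⟩
  have hcount := card_noncrossingMatchings_filter_mem_and (S := insert a T) (V := {a, b})
    (insert_subset_insert a (singleton_subset_iff.mpr hb)) (card_pair hab.ne) fun _ => True
  simp only [and_true] at hcount
  rw [hcount, hsdiff, ← card_noncrossingMatchings_union_filter fun x hx y hy =>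
    (mem_filter.mp hx).2.trans (mem_filter.mp hy).2]
  congr 1
  refine filter_congr fun P hP => forall₂_congr fun B hB => ?_
  have hPM := (mem_noncrossingMatchings.mp hP).1
  have hBT : ∀ x ∈ B, x ∈ T ∧ (x < b ∨ b < x) := fun x hx => by
    have hx' := hPM.subset hB hx
    rw [mem_union, mem_filter, mem_filter] at hx'
    exact ⟨hx'.elim And.left And.left, hx'.imp And.right And.right⟩
  rw [not_crosses_pair_iff (hPM.1 B hB) (fun x hx => ha x (hBT x hx).1)
    fun hbB => by simpa using (hBT b hbB).2]
  simp only [subset_iff, mem_filter]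
  exact or_congr (forall₂_congr fun x hx => (and_iff_right (hBT x hx).1).symm)
    (forall₂_congr fun x hx => (and_iff_right (hBT x hx).1).symm)

end MinimalBlock

theorem card_noncrossingMatchings (S : Finset ℕ) :
    #(noncrossingMatchings S) = aeratedCatalan #S := by
  induction hS : S.card using Nat.strong_induction_on generalizing S with
  | _ n ih =>
  obtain rfl | hne := S.eq_empty_or_nonempty
  · simp [noncrossingMatchings_empty, ← hS, aeratedCatalan]
  set a := S.min' hne
  set T := S.erase a
  have ha : ∀ x ∈ T, a < x := fun x hx => S.min'_lt_of_mem_erase_min' hne hx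
  have haT : a ∉ T := notMem_erase a S
  rw [← insert_erase (S.min'_mem hne)] at hS ⊢
  rw [card_insert_of_notMem haT] at hS
  rw [card_noncrossingMatchings_insert haT, ← hS, aeratedCatalan_succ,
    ← sum_card_filter_lt_card_filter_gt T fun i j => aeratedCatalan i * aeratedCatalan j]
  refine sum_congr rfl fun b hb => ?_
  rw [card_noncrossingMatchings_insert_filter_pair_mem ha hb,
    ih _ ((card_filter_le _ _).trans_lt (by omega)) _ rfl,
    ih _ ((card_filter_le _ _).trans_lt (by omega)) _ rfl]

open scoped Classical in
theorem card_noncrossingMatchings_filter_forall_pair_mem (T S : Finset ℕ)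
    (hT : ∀ j ∈ T, 0 < j ∧ {2 * j - 1, 2 * j} ⊆ S) :
    #{P ∈ noncrossingMatchings S | ∀ j ∈ T, {2 * j - 1, 2 * j} ∈ P}
      = aeratedCatalan (#S - 2 * #T) := by
  induction T using Finset.induction_on generalizing S with
  | empty => simp [card_noncrossingMatchings]
  | insert i T hiT ih =>
    obtain ⟨hi, hiS⟩ := hT i (mem_insert_self i T)
    have hpair : ({2 * i - 1, 2 * i} : Finset ℕ) = {2 * i - 1, 2 * i - 1 + 1} := by
      rw [Nat.sub_add_cancel (by omega)]
    have hdisj : ∀ j ∈ T, Disjoint ({2 * j - 1, 2 * j} : Finset ℕ) {2 * i - 1, 2 * i} := by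
      intro j hj
      have hj0 := (hT j (mem_insert_of_mem hj)).1
      have hji : j ≠ i := fun h => hiT (h ▸ hj)
      simp only [disjoint_insert_left, disjoint_insert_right, disjoint_singleton, mem_insert,
        mem_singleton]
      omega
    simp only [forall_mem_insert]
    rw [card_noncrossingMatchings_filter_mem_and hiS (card_pair (by omega)),
      filter_congr (q := fun P => ∀ j ∈ T, {2 * j - 1, 2 * j} ∈ P), ih, card_sdiff_of_subset hiS,
      card_pair (by omega), card_insert_of_notMem hiT]
    · congr 1
      omega
    · exact fun j hj => ⟨(hT j (mem_insert_of_mem hj)).1,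
        subset_sdiff.mpr ⟨(hT j (mem_insert_of_mem hj)).2, hdisj j hj⟩⟩
    · intro P _
      have hcross : ∀ B, ¬Crosses {2 * i - 1, 2 * i} B := hpair ▸ not_crosses_pair_succ _
      simp only [hcross, not_false_eq_true, implies_true, true_and]
      refine forall₂_congr fun j hj => ?_
      rw [mem_insert, or_iff_right]
      intro h
      have hself := hdisj j hj
      rw [h, disjoint_self_iff_empty] at hself
      simp at hself

theorem ncard_NCtwoCirc_eq_sum (k : ℕ) :
    ((NCtwoCirc k).ncard : ℤ)
      = ∑ m ∈ range (k + 1), (-1 : ℤ) ^ m * k.choose m * catalan (k - m) := by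
  have hset : NCtwoCirc k
      = ↑{P ∈ noncrossingMatchings (Icc 1 (2 * k)) | ∀ j ∈ Icc 1 k, {2 * j - 1, 2 * j} ∉ P} := by
    ext P
    simp [NCtwoCirc, mem_noncrossingMatchings, IsPerfectMatching, isPerfectMatchingOn_iff,
      and_assoc]
  have hpairs : ∀ T ∈ (Icc 1 k).powerset,
      #{P ∈ noncrossingMatchings (Icc 1 (2 * k)) | ∀ j ∈ T, {2 * j - 1, 2 * j} ∈ P}
        = catalan (k - #T) := by
    intro T hT
    have hTk : #T ≤ k := by simpa using card_le_card (mem_powerset.mp hT)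
    rw [card_noncrossingMatchings_filter_forall_pair_mem T _ fun j hj => ?_, Nat.card_Icc,
      show 2 * k + 1 - 1 - 2 * #T = 2 * (k - #T) by omega, aeratedCatalan_two_mul]
    have hjk := mem_Icc.mp (mem_powerset.mp hT hj)
    refine ⟨by omega, fun x hx => ?_⟩
    simp only [mem_insert, mem_singleton] at hx
    rw [mem_Icc]
    omega
  rw [hset, Set.ncard_coe_finset, card_filter_forall_not_eq_sum,
    sum_congr rfl fun T hT => by rw [hpairs T hT],
    sum_powerset_apply_card fun m => (-1 : ℤ) ^ m * catalan (k - m), Nat.card_Icc,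
    Nat.add_sub_cancel]
  simp only [nsmul_eq_mul, mul_assoc, mul_left_comm]

theorem integral_cos_pow_add_two (n : ℕ) :
    ∫ x in (0 : ℝ)..π / 2, cos x ^ (n + 2)
      = (n + 1) / (n + 2) * ∫ x in (0 : ℝ)..π / 2, cos x ^ n := by
  simp [integral_cos_pow]

theorem integral_cos_pow_two_mul (m : ℕ) :
    ∫ x in (0 : ℝ)..π / 2, cos x ^ (2 * m) = π / 2 * Nat.centralBinom m / 4 ^ m := by
  induction m with
  | zero => simp
  | succ m ih =>
    have hrec : (m + 1 : ℝ) * Nat.centralBinom (m + 1) = 2 * (2 * m + 1) * Nat.centralBinom m := by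
      exact_mod_cast Nat.succ_mul_centralBinom_succ m
    rw [eq_div_iff (by positivity), mul_add_one, integral_cos_pow_add_two, ih]
    push_cast
    rw [pow_succ]
    field_simp
    linear_combination -2 * hrec

theorem integral_cos_pow_two_mul_mul_sin_sq (m : ℕ) :
    ∫ x in (0 : ℝ)..π / 2, cos x ^ (2 * m) * sin x ^ 2 = π / 4 * catalan m / 4 ^ m := by
  have hsplit : ∀ x : ℝ, cos x ^ (2 * m) * sin x ^ 2 = cos x ^ (2 * m) - cos x ^ (2 * m + 2) := by
    intro x
    linear_combination cos x ^ (2 * m) * sin_sq_add_cos_sq x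
  have hint : ∀ n : ℕ, IntervalIntegrable (fun x => cos x ^ n) MeasureTheory.volume 0 (π / 2) :=
    fun n => (continuous_cos.pow n).intervalIntegrable _ _
  have hcat : (m + 1 : ℝ) * catalan m = Nat.centralBinom m := by
    exact_mod_cast succ_mul_catalan_eq_centralBinom m
  simp_rw [hsplit]
  rw [integral_sub (hint _) (hint _), integral_cos_pow_add_two, integral_cos_pow_two_mul, ← hcat]
  push_cast
  field_simp
  ring

theorem integral_four_cos_sq_sub_one_pow_mul_sin_sq (k : ℕ) :
    ∫ x in (0 : ℝ)..π / 2, (4 * cos x ^ 2 - 1) ^ k * sin x ^ 2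
      = π / 4 * ∑ m ∈ range (k + 1), (-1 : ℝ) ^ m * k.choose m * catalan (k - m) := by
  have hexpand : ∀ x : ℝ, (4 * cos x ^ 2 - 1) ^ k * sin x ^ 2
      = ∑ m ∈ range (k + 1),
          (-1) ^ m * k.choose m * 4 ^ (k - m) * (cos x ^ (2 * (k - m)) * sin x ^ 2) := by
    intro x
    rw [sub_eq_neg_add, add_pow, sum_mul]
    refine sum_congr rfl fun m _ => ?_
    rw [pow_mul, mul_pow]
    ring
  simp_rw [hexpand]
  rw [integral_finsetSum fun m _ => (by fun_prop : Continuous _).intervalIntegrable _ _, mul_sum]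
  refine sum_congr rfl fun m _ => ?_
  rw [integral_const_mul, integral_cos_pow_two_mul_mul_sin_sq]
  field_simp

theorem ncard_NCtwoCirc_eq_integral_general (k : ℕ) :
    ((NCtwoCirc k).ncard : ℝ)
      = 4 / Real.pi *
          ∫ θ in (0:ℝ)..(Real.pi / 2),
            (4 * Real.cos θ ^ 2 - 1) ^ k * Real.sin θ ^ 2 := by
  rw [integral_four_cos_sq_sub_one_pow_mul_sin_sq, ← mul_assoc, div_mul_div_cancel₀ pi_ne_zero,
    div_self four_ne_zero, one_mul]
  exact_mod_cast ncard_NCtwoCirc_eq_sum k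

/-- For `k ≥ 1`, the number of elements of `NC₂°(k)` equals
`(4/π) ∫₀^{π/2} (4 cos²θ - 1)^k sin²θ dθ`. -/
theorem ncard_NCtwoCirc_eq_integral (k : ℕ) (hk : 1 ≤ k) :
    ((NCtwoCirc k).ncard : ℝ)
      = 4 / Real.pi *
          ∫ θ in (0:ℝ)..(Real.pi / 2),
            (4 * Real.cos θ ^ 2 - 1) ^ k * Real.sin θ ^ 2 :=
  ncard_NCtwoCirc_eq_integral_general k
end

section
/- Let σ_k be the map on perfect matchings of {1, …, 2k} that replaces each block {a, b} by {s(a), s(b)}, where s(i) = i + 2 for i ≤ 2k − 2, s(2k − 1) = 1 and s(2k) = 2. Then: (i) NC₂°(1) is empty, so σ_1 has no fixed point in NC₂°(1); and (ii) for every k ≥ 2, σ_k has exactly one fixed point in NC₂°(k), namely the matching whose blocks are {1, 2k} together with {2j, 2j + 1} for j = 1, …, k − 1. -/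
/-- The cyclic shift by two positions on `{1, …, 2k}`:
`s i = i + 2` for `i ≤ 2k - 2`, `s (2k - 1) = 1` and `s (2k) = 2`. -/
def rotTwo (k : ℕ) : ℕ → ℕ := fun i => if i + 2 ≤ 2 * k then i + 2 else i + 2 - 2 * k

/-- The map `σ_k` replacing each block `{a, b}` of a matching by `{s a, s b}`. -/
def sigmaRot (k : ℕ) (P : Finset (Finset ℕ)) : Finset (Finset ℕ) :=
  P.image (fun B => B.image (rotTwo k))

/- ### Auxiliary lemmas -/

lemma pair_mem_iff {i a b : ℕ} : i ∈ ({a, b} : Finset ℕ) ↔ i = a ∨ i = b := by simp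

lemma card_two_lt {B : Finset ℕ} (h : B.card = 2) : ∃ a b : ℕ, a < b ∧ B = {a, b} := by
  obtain ⟨a, b, hab, rfl⟩ := Finset.card_eq_two.mp h
  rcases hab.lt_or_gt with h' | h'
  · exact ⟨a, b, h', rfl⟩
  · exact ⟨b, a, h', Finset.pair_comm a b⟩

lemma image_pair (f : ℕ → ℕ) (a b : ℕ) :
    ({a, b} : Finset ℕ).image f = {f a, f b} := by simp

lemma pair_eq_of {a b c d : ℕ} (h : a = c ∧ b = d ∨ a = d ∧ b = c) :
    ({a, b} : Finset ℕ) = {c, d} := by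
  rcases h with ⟨h1, h2⟩ | ⟨h1, h2⟩ <;> subst h1 <;> subst h2
  · rfl
  · exact Finset.pair_comm a b

lemma pair_eq_cases {a b c d : ℕ} (h : ({a, b} : Finset ℕ) = {c, d}) :
    (a = c ∧ b = d) ∨ (a = d ∧ b = c) := by
  have ha : a ∈ ({c, d} : Finset ℕ) := by rw [← h]; simp
  have hb : b ∈ ({c, d} : Finset ℕ) := by rw [← h]; simp
  have hc : c ∈ ({a, b} : Finset ℕ) := by rw [h]; simp
  have hd : d ∈ ({a, b} : Finset ℕ) := by rw [h]; simp
  simp only [pair_mem_iff] at ha hb hc hd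
  omega

lemma rotTwo_of_le {k i : ℕ} (h : i + 2 ≤ 2 * k) : rotTwo k i = i + 2 := by
  simp only [rotTwo]; exact if_pos h

lemma rotTwo_of_gt {k i : ℕ} (h : ¬ i + 2 ≤ 2 * k) : rotTwo k i = i + 2 - 2 * k := by
  simp only [rotTwo]; exact if_neg h

/-- The candidate fixed matching. -/
def P0 (k : ℕ) : Finset (Finset ℕ) :=
  insert ({1, 2 * k} : Finset ℕ)
    ((Finset.Icc 1 (k - 1)).image (fun j => ({2 * j, 2 * j + 1} : Finset ℕ)))

lemma mem_P0 {k : ℕ} {B : Finset ℕ} :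
    B ∈ P0 k ↔ B = {1, 2 * k} ∨ ∃ j, 1 ≤ j ∧ j ≤ k - 1 ∧ B = {2 * j, 2 * j + 1} := by
  simp only [P0, Finset.mem_insert, Finset.mem_image, Finset.mem_Icc]
  constructor
  · rintro (h | ⟨j, ⟨h1, h2⟩, h3⟩)
    · exact Or.inl h
    · exact Or.inr ⟨j, h1, h2, h3.symm⟩
  · rintro (h | ⟨j, h1, h2, h3⟩)
    · exact Or.inl h
    · exact Or.inr ⟨j, ⟨h1, h2⟩, h3.symm⟩

lemma P0_cover {k : ℕ} (hk : 2 ≤ k) {i : ℕ} (h1 : 1 ≤ i) (h2 : i ≤ 2 * k) :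
    ∃ B ∈ P0 k, i ∈ B := by
  by_cases hi1 : i = 1
  · exact ⟨{1, 2 * k}, mem_P0.mpr (Or.inl rfl), by simp [hi1]⟩
  by_cases hik : i = 2 * k
  · exact ⟨{1, 2 * k}, mem_P0.mpr (Or.inl rfl), by simp [hik]⟩
  rcases Nat.even_or_odd i with ⟨j, hj⟩ | ⟨j, hj⟩
  · refine ⟨{2 * j, 2 * j + 1}, mem_P0.mpr (Or.inr ⟨j, by omega, by omega, rfl⟩), ?_⟩
    rw [pair_mem_iff]; omega
  · refine ⟨{2 * j, 2 * j + 1}, mem_P0.mpr (Or.inr ⟨j, by omega, by omega, rfl⟩), ?_⟩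
    rw [pair_mem_iff]; omega

lemma P0_unique {k : ℕ} (hk : 2 ≤ k) {B C : Finset ℕ} (hB : B ∈ P0 k) (hC : C ∈ P0 k)
    {i : ℕ} (hiB : i ∈ B) (hiC : i ∈ C) : B = C := by
  rcases mem_P0.mp hB with rfl | ⟨j, hj1, hj2, rfl⟩ <;>
    rcases mem_P0.mp hC with rfl | ⟨j', hj1', hj2', rfl⟩
  · rfl
  · exfalso; rw [pair_mem_iff] at hiB hiC; omega
  · exfalso; rw [pair_mem_iff] at hiB hiC; omega
  · have : j = j' := by rw [pair_mem_iff] at hiB hiC; omega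
    rw [this]

lemma P0_spec {k : ℕ} (hk : 2 ≤ k) : P0 k ∈ NCtwoCirc k := by
  refine ⟨⟨?_, ?_, ?_⟩, ?_, ?_⟩
  · intro B hB
    rcases mem_P0.mp hB with rfl | ⟨j, hj1, hj2, rfl⟩
    · exact Finset.card_pair (by omega)
    · exact Finset.card_pair (by omega)
  · intro B hB
    rcases mem_P0.mp hB with rfl | ⟨j, hj1, hj2, rfl⟩ <;>
      · intro x hx
        rw [pair_mem_iff] at hx
        rw [Finset.mem_Icc]
        omega
  · intro i hi
    rw [Finset.mem_Icc] at hi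
    obtain ⟨B, hB, hiB⟩ := P0_cover hk hi.1 hi.2
    exact ⟨B, ⟨hB, hiB⟩, fun C hC => P0_unique hk hC.1 hB hC.2 hiB⟩
  · intro a b c d hab hbc hcd hac hbd
    rcases mem_P0.mp hac with h | ⟨j, hj1, hj2, h⟩
    · rcases pair_eq_cases h with ⟨ha, hc⟩ | ⟨ha, hc⟩
      · -- a = 1, c = 2k, so d > 2k impossible
        rcases mem_P0.mp hbd with h' | ⟨j', hj1', hj2', h'⟩
        · rcases pair_eq_cases h' with ⟨hb, hd⟩ | ⟨hb, hd⟩ <;> omega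
        · rcases pair_eq_cases h' with ⟨hb, hd⟩ | ⟨hb, hd⟩ <;> omega
      · omega
    · rcases pair_eq_cases h with ⟨ha, hc⟩ | ⟨ha, hc⟩ <;> omega
  · intro j hj1 hj2 hcon
    rcases mem_P0.mp hcon with h | ⟨j', hj1', hj2', h⟩
    · rcases pair_eq_cases h with ⟨h3, h4⟩ | ⟨h3, h4⟩ <;> omega
    · rcases pair_eq_cases h with ⟨h3, h4⟩ | ⟨h3, h4⟩ <;> omega

lemma P0_fixed {k : ℕ} (hk : 2 ≤ k) : sigmaRot k (P0 k) = P0 k := by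
  apply Finset.Subset.antisymm
  · intro C hC
    simp only [sigmaRot] at hC
    obtain ⟨B, hB, rfl⟩ := Finset.mem_image.mp hC
    rcases mem_P0.mp hB with rfl | ⟨j, hj1, hj2, rfl⟩
    · rw [image_pair, rotTwo_of_le (by omega), rotTwo_of_gt (by omega)]
      exact mem_P0.mpr (Or.inr ⟨1, le_rfl, by omega, pair_eq_of (by omega)⟩)
    · by_cases hjk : j = k - 1
      · subst hjk
        rw [image_pair, rotTwo_of_le (by omega), rotTwo_of_gt (by omega)]
        exact mem_P0.mpr (Or.inl (pair_eq_of (by omega)))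
      · rw [image_pair, rotTwo_of_le (by omega), rotTwo_of_le (by omega)]
        exact mem_P0.mpr (Or.inr ⟨j + 1, by omega, by omega, pair_eq_of (by omega)⟩)
  · intro B hB
    simp only [sigmaRot]
    rcases mem_P0.mp hB with rfl | ⟨j, hj1, hj2, rfl⟩
    · refine Finset.mem_image.mpr ⟨{2 * (k - 1), 2 * (k - 1) + 1},
        mem_P0.mpr (Or.inr ⟨k - 1, by omega, le_rfl, rfl⟩), ?_⟩
      rw [image_pair, rotTwo_of_le (by omega), rotTwo_of_gt (by omega)]
      exact pair_eq_of (by omega)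
    · by_cases hj : j = 1
      · subst hj
        refine Finset.mem_image.mpr ⟨{1, 2 * k}, mem_P0.mpr (Or.inl rfl), ?_⟩
        rw [image_pair, rotTwo_of_le (by omega), rotTwo_of_gt (by omega)]
        exact pair_eq_of (by omega)
      · refine Finset.mem_image.mpr ⟨{2 * (j - 1), 2 * (j - 1) + 1},
          mem_P0.mpr (Or.inr ⟨j - 1, by omega, by omega, rfl⟩), ?_⟩
        rw [image_pair, rotTwo_of_le (by omega), rotTwo_of_le (by omega)]
        exact pair_eq_of (by omega)

/-- Any noncrossing perfect matching without "vertical" blocks contains a block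
`{2j, 2j+1}` with `1 ≤ j ≤ k - 1`. -/
lemma exists_adj {k : ℕ} (hk : 2 ≤ k) {P : Finset (Finset ℕ)}
    (hcard : ∀ B ∈ P, B.card = 2) (hsub : ∀ B ∈ P, B ⊆ Finset.Icc 1 (2 * k))
    (hcover : ∀ i ∈ Finset.Icc 1 (2 * k), ∃! B : Finset ℕ, B ∈ P ∧ i ∈ B)
    (hNC : IsNoncrossing P)
    (hV : ∀ j : ℕ, 1 ≤ j → j ≤ k → ({2 * j - 1, 2 * j} : Finset ℕ) ∉ P) :
    ∃ j, 1 ≤ j ∧ j ≤ k - 1 ∧ ({2 * j, 2 * j + 1} : Finset ℕ) ∈ P := by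
  classical
  have huniq : ∀ i, 1 ≤ i → i ≤ 2 * k → ∀ B ∈ P, ∀ C ∈ P, i ∈ B → i ∈ C → B = C := by
    intro i h1 h2 B hB C hC hiB hiC
    obtain ⟨D, _, hD⟩ := hcover i (Finset.mem_Icc.mpr ⟨h1, h2⟩)
    exact (hD B ⟨hB, hiB⟩).trans (hD C ⟨hC, hiC⟩).symm
  set T := (Finset.Icc 1 (2 * k) ×ˢ Finset.Icc 1 (2 * k)).filter
    (fun p => p.1 < p.2 ∧ ({p.1, p.2} : Finset ℕ) ∈ P) with hT
  have hmemT : ∀ a b : ℕ, (a, b) ∈ T ↔ a < b ∧ ({a, b} : Finset ℕ) ∈ P := by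
    intro a b
    simp only [hT, Finset.mem_filter, Finset.mem_product, Finset.mem_Icc]
    constructor
    · rintro ⟨_, h⟩; exact h
    · rintro ⟨h1, h2⟩
      have ha := hsub _ h2 (show a ∈ ({a, b} : Finset ℕ) by simp)
      have hb := hsub _ h2 (show b ∈ ({a, b} : Finset ℕ) by simp)
      rw [Finset.mem_Icc] at ha hb
      exact ⟨⟨ha, hb⟩, h1, h2⟩
  have hne : T.Nonempty := by
    obtain ⟨B, ⟨hB, h1B⟩, _⟩ := hcover 1 (Finset.mem_Icc.mpr ⟨le_rfl, by omega⟩)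
    obtain ⟨a, b, hab, rfl⟩ := card_two_lt (hcard B hB)
    exact ⟨(a, b), (hmemT a b).mpr ⟨hab, hB⟩⟩
  obtain ⟨p, hpT, hmin⟩ := T.exists_min_image (fun p => p.2 - p.1) hne
  obtain ⟨hab, hmem⟩ := (hmemT p.1 p.2).mp hpT
  have hbnd : 1 ≤ p.1 ∧ p.2 ≤ 2 * k := by
    have h1 := hsub _ hmem (show p.1 ∈ ({p.1, p.2} : Finset ℕ) by simp)
    have h2 := hsub _ hmem (show p.2 ∈ ({p.1, p.2} : Finset ℕ) by simp)
    rw [Finset.mem_Icc] at h1 h2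
    exact ⟨h1.1, h2.2⟩
  have hadj : p.2 = p.1 + 1 := by
    by_contra hne2
    have hlt : p.1 + 1 < p.2 := by omega
    obtain ⟨C, ⟨hC, hiC⟩, _⟩ := hcover (p.1 + 1) (Finset.mem_Icc.mpr ⟨by omega, by omega⟩)
    obtain ⟨c, d, hcd, rfl⟩ := card_two_lt (hcard C hC)
    have hCne : ({c, d} : Finset ℕ) ≠ ({p.1, p.2} : Finset ℕ) := by
      intro h
      rw [h, pair_mem_iff] at hiC
      omega
    rcases pair_mem_iff.mp hiC with hc | hd
    · -- p.1 + 1 = c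
      rcases lt_trichotomy d p.2 with h' | h' | h'
      · have hmemT' : (c, d) ∈ T := (hmemT _ _).mpr ⟨hcd, hC⟩
        have := hmin _ hmemT'
        simp only at this
        omega
      · subst h'
        exact hCne (huniq p.2 (by omega) hbnd.2 _ hC _ hmem (by simp) (by simp))
      · exact absurd (show ({p.1 + 1, d} : Finset ℕ) ∈ P by rwa [hc]) 
          (hNC p.1 (p.1 + 1) p.2 d (by omega) hlt h' hmem)
    · -- p.1 + 1 = d
      have hc_le : c ≤ p.1 := by omega
      rcases eq_or_lt_of_le hc_le with h' | h'
      · exact hCne (huniq p.1 hbnd.1 (by omega) _ hC _ hmem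
          (by rw [pair_mem_iff]; omega) (by simp))
      · exact absurd hmem (hNC c p.1 (p.1 + 1) p.2 h' (by omega) hlt
          (show ({c, p.1 + 1} : Finset ℕ) ∈ P by rwa [hd]))
  rcases Nat.even_or_odd p.1 with ⟨j, hj⟩ | ⟨j, hj⟩
  · refine ⟨j, by omega, by omega, ?_⟩
    rwa [show ({2 * j, 2 * j + 1} : Finset ℕ) = {p.1, p.2} from pair_eq_of (by omega)]
  · exfalso
    apply hV (j + 1) (by omega) (by omega)
    rwa [show ({2 * (j + 1) - 1, 2 * (j + 1)} : Finset ℕ) = {p.1, p.2} from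
      pair_eq_of (by omega)]

lemma fixed_unique {k : ℕ} (hk : 2 ≤ k) {P : Finset (Finset ℕ)}
    (hP : P ∈ NCtwoCirc k) (hfix : sigmaRot k P = P) : P = P0 k := by
  obtain ⟨⟨hcard, hsub, hcover⟩, hNC, hV⟩ := hP
  have hrot : ∀ B ∈ P, B.image (rotTwo k) ∈ P := by
    intro B hB
    rw [← hfix]
    simp only [sigmaRot]
    exact Finset.mem_image_of_mem _ hB
  have huniq : ∀ i, 1 ≤ i → i ≤ 2 * k → ∀ B ∈ P, ∀ C ∈ P, i ∈ B → i ∈ C → B = C := by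
    intro i h1 h2 B hB C hC hiB hiC
    obtain ⟨D, _, hD⟩ := hcover i (Finset.mem_Icc.mpr ⟨h1, h2⟩)
    exact (hD B ⟨hB, hiB⟩).trans (hD C ⟨hC, hiC⟩).symm
  obtain ⟨j0, hj01, hj02, hj0⟩ := exists_adj hk hcard hsub hcover hNC hV
  have step : ∀ j, 1 ≤ j → j ≤ k - 2 → ({2 * j, 2 * j + 1} : Finset ℕ) ∈ P →
      ({2 * (j + 1), 2 * (j + 1) + 1} : Finset ℕ) ∈ P := by
    intro j h1 h2 hmem
    have h := hrot _ hmem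
    rw [image_pair, rotTwo_of_le (by omega), rotTwo_of_le (by omega)] at h
    rwa [show ({2 * j + 2, 2 * j + 1 + 2} : Finset ℕ) = {2 * (j + 1), 2 * (j + 1) + 1} from
      pair_eq_of (by omega)] at h
  have up : ∀ n, ∀ j, 1 ≤ j → j + n ≤ k - 1 → ({2 * j, 2 * j + 1} : Finset ℕ) ∈ P →
      ({2 * (j + n), 2 * (j + n) + 1} : Finset ℕ) ∈ P := by
    intro n
    induction n with
    | zero => intro j _ _ h; simpa using h
    | succ m ih =>
      intro j h1 h2 h
      have h' := step j h1 (by omega) h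
      have h'' := ih (j + 1) (by omega) (by omega) h'
      rwa [show j + 1 + m = j + (m + 1) from by omega] at h''
  have hlast : ({2 * (k - 1), 2 * (k - 1) + 1} : Finset ℕ) ∈ P := by
    have h := up (k - 1 - j0) j0 hj01 (by omega) hj0
    rwa [show j0 + (k - 1 - j0) = k - 1 from by omega] at h
  have h1k : ({1, 2 * k} : Finset ℕ) ∈ P := by
    have h := hrot _ hlast
    rw [image_pair, rotTwo_of_le (by omega), rotTwo_of_gt (by omega)] at h
    rwa [show ({2 * (k - 1) + 2, 2 * (k - 1) + 1 + 2 - 2 * k} : Finset ℕ) = {1, 2 * k} from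
      pair_eq_of (by omega)] at h
  have h23 : ({2 * 1, 2 * 1 + 1} : Finset ℕ) ∈ P := by
    have h := hrot _ h1k
    rw [image_pair, rotTwo_of_le (by omega), rotTwo_of_gt (by omega)] at h
    rwa [show ({1 + 2, 2 * k + 2 - 2 * k} : Finset ℕ) = {2 * 1, 2 * 1 + 1} from
      pair_eq_of (by omega)] at h
  have hall : ∀ j, 1 ≤ j → j ≤ k - 1 → ({2 * j, 2 * j + 1} : Finset ℕ) ∈ P := by
    intro j h1 h2
    have h := up (j - 1) 1 le_rfl (by omega) h23
    rwa [show 1 + (j - 1) = j from by omega] at h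
  have hP0sub : P0 k ⊆ P := by
    intro B hB
    rcases mem_P0.mp hB with rfl | ⟨j, h1, h2, rfl⟩
    · exact h1k
    · exact hall j h1 h2
  apply Finset.Subset.antisymm _ hP0sub
  intro B hB
  obtain ⟨a, b, hab, rfl⟩ := card_two_lt (hcard B hB)
  have ha := hsub _ hB (show a ∈ ({a, b} : Finset ℕ) by simp)
  rw [Finset.mem_Icc] at ha
  obtain ⟨C, hC, haC⟩ := P0_cover hk ha.1 ha.2
  rw [huniq a ha.1 ha.2 _ hB _ (hP0sub hC) (by simp) haC]
  exact hC

/-- (i) `NC₂°(1)` is empty, so `σ_1` has no fixed point in it; and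
(ii) for every `k ≥ 2`, `σ_k` has exactly one fixed point in `NC₂°(k)`,
namely the matching with blocks `{1, 2k}` and `{2j, 2j+1}` for `j = 1, …, k-1`. -/
theorem sigmaRot_fixedPoints :
    NCtwoCirc 1 = ∅ ∧
      ∀ k : ℕ, 2 ≤ k →
        {P | P ∈ NCtwoCirc k ∧ sigmaRot k P = P}
          = {insert ({1, 2 * k} : Finset ℕ)
              ((Finset.Icc 1 (k - 1)).image
                (fun j => ({2 * j, 2 * j + 1} : Finset ℕ)))} := by
  constructor
  · apply Set.eq_empty_iff_forall_notMem.mpr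
    intro P hP
    obtain ⟨⟨hcard, hsub, hcover⟩, hNC, hV⟩ := hP
    obtain ⟨B, ⟨hB, h1B⟩, _⟩ := hcover 1 (Finset.mem_Icc.mpr ⟨le_rfl, by omega⟩)
    have hBeq : B = Finset.Icc 1 (2 * 1) := by
      apply Finset.eq_of_subset_of_card_le (hsub B hB)
      rw [hcard B hB, Nat.card_Icc]
    apply hV 1 le_rfl le_rfl
    rw [show ({2 * 1 - 1, 2 * 1} : Finset ℕ) = Finset.Icc 1 (2 * 1) from by
      ext x; rw [pair_mem_iff, Finset.mem_Icc]; omega, ← hBeq]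
    exact hB
  · intro k hk
    ext P
    simp only [Set.mem_setOf_eq, Set.mem_singleton_iff]
    constructor
    · rintro ⟨hP, hfix⟩
      exact fixed_unique hk hP hfix
    · rintro rfl
      exact ⟨P0_spec hk, P0_fixed hk⟩
end
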